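/- In the Mermin–GHZ game under uniform inputs on the even-parity set {000, 011, 101, 110}, the local value (supremum of winning probability over convex mixtures of deterministic local strategies) equals exactly 3/4. -/
import Mathlib


def ghzInputs : Finset (Bool × Bool × Bool) :=
  {(false, false, false), (false, true, true), (true, false, true), (true, true, false)}

def ghzWin (a b c : Bool → Bool) (i : Bool × Bool × Bool) : Prop :=
  Bool.xor (Bool.xor (a i.1) (b i.2.1)) (c i.2.2) = (i.1 || i.2.1 || i.2.2)

instance (a b c : Bool → Bool) : DecidablePred (ghzWin a b c) := fun i => by
  unfold ghzWin; infer_instance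

/-- Winning probability of a deterministic strategy under uniform inputs on the four
allowed GHZ inputs. -/
noncomputable def detWinProb (a b c : Bool → Bool) : ℝ :=
  ((ghzInputs.filter (ghzWin a b c)).card : ℝ) / 4

lemma card_le_three : ∀ a b c : Bool → Bool,
    (ghzInputs.filter (ghzWin a b c)).card ≤ 3 := by decide

lemma detWinProb_le (a b c : Bool → Bool) : detWinProb a b c ≤ 3/4 := by
  unfold detWinProb
  have := card_le_three a b c
  have : ((ghzInputs.filter (ghzWin a b c)).card : ℝ) ≤ 3 := by exact_mod_cast this
  linarith

lemma good_card : (ghzInputs.filter (ghzWin id id (fun _ => false))).card = 3 := by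
  decide

lemma good_prob : detWinProb id id (fun _ => false) = 3/4 := by
  unfold detWinProb; rw [good_card]; norm_num

/-- The local value of the Mermin–GHZ game (supremum over convex mixtures of
deterministic strategies) equals exactly `3/4`. -/
theorem stmt_9 :
    sSup {v : ℝ | ∃ (n : ℕ) (w : Fin n → ℝ) (A B C : Fin n → Bool → Bool),
      (∀ i, 0 ≤ w i) ∧ ∑ i, w i = 1 ∧
      v = ∑ i, w i * detWinProb (A i) (B i) (C i)} = 3/4 := by
  have hmem : (3/4 : ℝ) ∈ {v : ℝ | ∃ (n : ℕ) (w : Fin n → ℝ) (A B C : Fin n → Bool → Bool),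
      (∀ i, 0 ≤ w i) ∧ ∑ i, w i = 1 ∧
      v = ∑ i, w i * detWinProb (A i) (B i) (C i)} := by
    refine ⟨1, fun _ => 1, fun _ => id, fun _ => id, fun _ _ => false,
      fun _ => zero_le_one, by simp, ?_⟩
    simp [good_prob]
  have hub : ∀ v ∈ {v : ℝ | ∃ (n : ℕ) (w : Fin n → ℝ) (A B C : Fin n → Bool → Bool),
      (∀ i, 0 ≤ w i) ∧ ∑ i, w i = 1 ∧
      v = ∑ i, w i * detWinProb (A i) (B i) (C i)}, v ≤ 3/4 := by
    rintro v ⟨n, w, A, B, C, hw, hs, rfl⟩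
    calc ∑ i, w i * detWinProb (A i) (B i) (C i)
        ≤ ∑ i, w i * (3/4) := by
          apply Finset.sum_le_sum
          intro i _
          exact mul_le_mul_of_nonneg_left (detWinProb_le _ _ _) (hw i)
      _ = 3/4 := by rw [← Finset.sum_mul, hs, one_mul]
  exact le_antisymm (csSup_le ⟨_, hmem⟩ hub) (le_csSup ⟨3/4, hub⟩ hmem)
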